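/- arXiv:1802.05795 — 6 statements merged into one kernel-verified Lean document; each statement's English description precedes it below -/
import Mathlib

section
/- For a linear program min cᵀx subject to x ∈ M (where M is defined by finitely many linear equalities/inequalities) and its dual max bᵀy subject to y ∈ N, the duality gap is zero if and only if at least one of the primal or the dual program is feasible. -/
open Matrix

/-- Optimal value (in the extended reals) of the primal LP
`min cᵀx  s.t.  Ax = b, x ≥ 0`.  Infeasible = `⊤`, unbounded = `⊥`. -/
noncomputable def primalValA {m n : ℕ} (A : Matrix (Fin m) (Fin n) ℝ) (b : Fin m → ℝ)
    (c : Fin n → ℝ) : EReal :=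
  sInf ((fun x => ((c ⬝ᵥ x : ℝ) : EReal)) '' {x | A.mulVec x = b ∧ 0 ≤ x})

/-- Optimal value of the dual LP `max bᵀy  s.t.  Aᵀy ≤ c`.
Infeasible = `⊥`, unbounded = `⊤`. -/
noncomputable def dualValA {m n : ℕ} (A : Matrix (Fin m) (Fin n) ℝ) (b : Fin m → ℝ)
    (c : Fin n → ℝ) : EReal :=
  sSup ((fun y => ((b ⬝ᵥ y : ℝ) : EReal)) '' {y | Aᵀ.mulVec y ≤ c})

/-!
Weak duality gives `dualValA ≤ primalValA` unconditionally. Conversely, if `γ < primalValA`, Farkas'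
lemma produces a dual feasible point of value above `γ`: when the primal is feasible, apply it to
the infeasible system `A x = b`, `cᵀx + s = γ`, `x, s ≥ 0`; when the primal is infeasible, its
Farkas certificate is a direction along which the dual objective is unbounded from any dual
feasible point. If neither program is feasible, the values are `⊤ ≠ ⊥`.

Farkas' lemma is hyperplane separation from the cone `A(ℝ≥0ⁿ)`, which is closed by the conic
Carathéodory theorem: every point of it is the image of some `x ≥ 0` on whose support `A` is
injective, and on each such support `A` is a closed embedding.
-/

open Function

def supportedIn (𝕜 : Type*) {ι : Type*} [Semiring 𝕜] (s : Set ι) : Submodule 𝕜 (ι → 𝕜) :=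
  Submodule.pi sᶜ fun _ => ⊥

lemma mem_supportedIn {𝕜 ι : Type*} [Semiring 𝕜] {s : Set ι} {d : ι → 𝕜} :
    d ∈ supportedIn 𝕜 s ↔ support d ⊆ s := by
  rw [support_subset_iff']
  simp [supportedIn, Submodule.mem_pi]

section Caratheodory

variable {𝕜 ι V : Type*} [Field 𝕜] [LinearOrder 𝕜] [IsStrictOrderedRing 𝕜] [Fintype ι]
  [AddCommGroup V] [Module 𝕜 V]

lemma exists_sub_smul_nonneg_support_ssubset {x d : ι → 𝕜} (hx : 0 ≤ x)
    (hd : support d ⊆ support x) {j₀ : ι} (hj₀ : 0 < d j₀) :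
    ∃ t : 𝕜, 0 ≤ x - t • d ∧ support (x - t • d) ⊂ support x := by
  classical
  obtain ⟨j₁, hj₁, hmin⟩ := Finset.exists_min_image {j | 0 < d j} (fun j => x j / d j)
    ⟨j₀, by simpa using hj₀⟩
  rw [Finset.mem_filter_univ] at hj₁
  refine ⟨x j₁ / d j₁, fun j => ?_, ?_⟩
  · have ht : 0 ≤ x j₁ / d j₁ := div_nonneg (hx j₁) hj₁.le
    simp only [Pi.zero_apply, Pi.sub_apply, Pi.smul_apply, smul_eq_mul, sub_nonneg]
    rcases le_or_gt (d j) 0 with hdj | hdj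
    · exact (mul_nonpos_of_nonneg_of_nonpos ht hdj).trans (hx j)
    · exact (le_div_iff₀ hdj).mp (hmin j (by simpa using hdj))
  · refine (Set.ssubset_iff_of_subset fun j hj => ?_).mpr ⟨j₁, hd hj₁.ne', by simp [hj₁.ne']⟩
    by_contra hxj
    have hdj : d j = 0 := by_contra fun h => hxj (hd h)
    simp [notMem_support.mp hxj, hdj] at hj

lemma exists_nonneg_apply_eq_support_ssubset (L : (ι → 𝕜) →ₗ[𝕜] V) {x : ι → 𝕜} (hx : 0 ≤ x)
    (hdep : ¬ Disjoint (LinearMap.ker L) (supportedIn 𝕜 (support x))) :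
    ∃ x', 0 ≤ x' ∧ L x' = L x ∧ support x' ⊂ support x := by
  obtain ⟨d, hdL, hdx, hd⟩ :
      ∃ d ∈ LinearMap.ker L, d ∈ supportedIn 𝕜 (support x) ∧ ∃ j, 0 < d j := by
    obtain ⟨d, hdL, hdx, hd0⟩ := by simpa [Submodule.disjoint_def] using hdep
    obtain ⟨j, hj⟩ := Function.ne_iff.mp hd0
    rcases hj.lt_or_gt with hneg | hpos
    · exact ⟨-d, neg_mem hdL, neg_mem hdx, j, by simpa using hneg⟩
    · exact ⟨d, hdL, hdx, j, hpos⟩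
  obtain ⟨j₀, hj₀⟩ := hd
  obtain ⟨t, ht, hsub⟩ := exists_sub_smul_nonneg_support_ssubset hx (mem_supportedIn.mp hdx) hj₀
  exact ⟨x - t • d, ht, by simp [LinearMap.mem_ker.mp hdL], hsub⟩

theorem exists_nonneg_apply_eq_disjoint_ker (L : (ι → 𝕜) →ₗ[𝕜] V) {x : ι → 𝕜} (hx : 0 ≤ x) :
    ∃ x', 0 ≤ x' ∧ L x' = L x ∧ Disjoint (LinearMap.ker L) (supportedIn 𝕜 (support x')) := by
  induction h : (support x).ncard using Nat.strong_induction_on generalizing x with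
  | _ n ih =>
    by_cases hdep : Disjoint (LinearMap.ker L) (supportedIn 𝕜 (support x))
    · exact ⟨x, hx, rfl, hdep⟩
    obtain ⟨y, hy, hLy, hsub⟩ := exists_nonneg_apply_eq_support_ssubset L hx hdep
    obtain ⟨x', hx', hLx', hker⟩ := ih _ (h ▸ Set.ncard_lt_ncard hsub) hy rfl
    exact ⟨x', hx', hLx'.trans hLy, hker⟩

end Caratheodory

section Closedness

variable {𝕜 E F : Type*} [NontriviallyNormedField 𝕜] [CompleteSpace 𝕜]
  [AddCommGroup E] [TopologicalSpace E] [IsTopologicalAddGroup E] [Module 𝕜 E] [ContinuousSMul 𝕜 E]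
  [T2Space E] [FiniteDimensional 𝕜 E]
  [AddCommGroup F] [TopologicalSpace F] [IsTopologicalAddGroup F] [Module 𝕜 F] [ContinuousSMul 𝕜 F]
  [T2Space F]

lemma LinearMap.isClosed_image_of_disjoint_ker (L : E →ₗ[𝕜] F) {P : Submodule 𝕜 E}
    (hP : Disjoint (LinearMap.ker L) P) {t : Set E} (ht : IsClosed t) (htP : t ⊆ P) :
    IsClosed (L '' t) := by
  have hinj : LinearMap.ker (L.domRestrict P) = ⊥ := by
    rwa [LinearMap.ker_domRestrict, ← Submodule.disjoint_iff_comap_eq_bot, disjoint_comm]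
  have himage : L '' t = L.domRestrict P '' (Subtype.val ⁻¹' t) :=
    calc L '' t = L '' (Subtype.val '' (Subtype.val ⁻¹' t : Set P)) := by
          rw [Set.image_preimage_eq_of_subset (by simpa using htP)]
      _ = L.domRestrict P '' (Subtype.val ⁻¹' t) := Set.image_image _ _ _
  rw [himage]
  exact (LinearMap.isClosedEmbedding_of_injective hinj).isClosedMap _
    (ht.preimage continuous_subtype_val)

end Closedness

section NonnegOrthant

variable {ι F : Type*} [Fintype ι]
  [AddCommGroup F] [TopologicalSpace F] [IsTopologicalAddGroup F] [Module ℝ F] [ContinuousSMul ℝ F]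
  [T2Space F]

theorem LinearMap.isClosed_image_nonneg (L : (ι → ℝ) →ₗ[ℝ] F) : IsClosed (L '' {x | 0 ≤ x}) := by
  have hunion : L '' {x | 0 ≤ x} = ⋃ (s : Set ι) (_ : Disjoint (LinearMap.ker L) (supportedIn ℝ s)),
      L '' ({x | 0 ≤ x} ∩ supportedIn ℝ s) := by
    refine subset_antisymm ?_ (Set.iUnion₂_subset fun s _ => Set.image_mono Set.inter_subset_left)
    rintro _ ⟨x, hx, rfl⟩
    obtain ⟨x', hx', hLx', hker⟩ := exists_nonneg_apply_eq_disjoint_ker L hx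
    exact Set.mem_iUnion₂.mpr ⟨_, hker, x', ⟨hx', mem_supportedIn.mpr subset_rfl⟩, hLx'⟩
  rw [hunion]
  refine isClosed_iUnion_of_finite fun s => isClosed_iUnion_of_finite fun hker => ?_
  exact L.isClosed_image_of_disjoint_ker hker
    (isClosed_Ici.inter (Submodule.closed_of_finiteDimensional _)) Set.inter_subset_right

end NonnegOrthant

namespace Matrix

variable {I J : Type*} [Fintype I] [Fintype J] (A : Matrix I J ℝ) {b : I → ℝ} {c : J → ℝ}

theorem farkas (hb : ∀ x, 0 ≤ x → A *ᵥ x ≠ b) : ∃ y, 0 ≤ Aᵀ *ᵥ y ∧ b ⬝ᵥ y < 0 := by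
  classical
  let C : ProperCone ℝ (I → ℝ) :=
    { toSubmodule := PointedCone.map A.mulVecLin (PointedCone.positive ℝ (J → ℝ))
      isClosed' := by
        simpa [PointedCone.coe_map, Set.Ici] using A.mulVecLin.isClosed_image_nonneg }
  obtain ⟨f, hfC, hfb⟩ := C.hyperplane_separation_point (x₀ := b) fun ⟨x, hx, hxb⟩ =>
    hb x ((PointedCone.mem_positive ℝ _).mp hx) hxb
  have hf : ∀ z, f z = z ⬝ᵥ fun i => f (Pi.single i 1) := fun z => by
    conv_lhs => rw [← Finset.univ_sum_single z]
    refine (map_sum f _ _).trans (Finset.sum_congr rfl fun i _ => ?_)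
    rw [← smul_eq_mul, ← map_smul, ← Pi.single_smul', smul_eq_mul, mul_one]
  refine ⟨fun i => f (Pi.single i 1), fun j => ?_, hf b ▸ hfb⟩
  have hcol : A *ᵥ Pi.single j 1 ∈ C :=
    ⟨Pi.single j 1, (PointedCone.mem_positive ℝ _).mpr (Pi.single_nonneg.mpr zero_le_one), rfl⟩
  have := hfC _ hcol
  rwa [hf, mulVec_single_one] at this

theorem weak_duality {x : J → ℝ} {y : I → ℝ} (hx : 0 ≤ x) (hAx : A *ᵥ x = b)
    (hy : Aᵀ *ᵥ y ≤ c) : b ⬝ᵥ y ≤ c ⬝ᵥ x :=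
  calc b ⬝ᵥ y = Aᵀ *ᵥ y ⬝ᵥ x := by
        rw [← hAx, dotProduct_comm, dotProduct_mulVec, ← mulVec_transpose]
    _ ≤ c ⬝ᵥ x := dotProduct_le_dotProduct_of_nonneg_right hy hx

theorem exists_dual_gt_of_forall_lt_primal {x₀ : J → ℝ} (hx₀ : 0 ≤ x₀) (hAx₀ : A *ᵥ x₀ = b)
    {γ : ℝ} (hγ : ∀ x, 0 ≤ x → A *ᵥ x = b → γ < c ⬝ᵥ x) :
    ∃ y, Aᵀ *ᵥ y ≤ c ∧ γ < b ⬝ᵥ y := by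
  -- `A' (x, s) = (b, γ)` with `x, s ≥ 0` says `A x = b`, `cᵀx + s = γ`.
  set A' := fromBlocks A 0 (replicateRow Unit c) (1 : Matrix Unit Unit ℝ)
  have hA' : ∀ u, A' *ᵥ u =
      Sum.elim (A *ᵥ (u ∘ Sum.inl)) fun _ => c ⬝ᵥ (u ∘ Sum.inl) + u (Sum.inr ()) := fun u => by
    ext (i | i) <;> simp [A', fromBlocks_mulVec]; rfl
  have hA't : ∀ w, A'ᵀ *ᵥ w =
      Sum.elim (Aᵀ *ᵥ (w ∘ Sum.inl) + w (Sum.inr ()) • c) fun _ => w (Sum.inr ()) := fun w => by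
    ext (i | i) <;> simp [A', mulVec, dotProduct, mul_comm]
  obtain ⟨w, hw, hbw⟩ := A'.farkas (b := Sum.elim b fun _ => γ) fun u hu hAu => by
    rw [hA'] at hAu
    have hx : A *ᵥ (u ∘ Sum.inl) = b := by simpa using congrArg (· ∘ Sum.inl) hAu
    have hcx : c ⬝ᵥ (u ∘ Sum.inl) + u (Sum.inr ()) = γ := by simpa using congrFun hAu (Sum.inr ())
    have hs : 0 ≤ u (Sum.inr ()) := hu _
    have hlt := hγ (u ∘ Sum.inl) (fun j => hu (Sum.inl j)) hx
    linarith
  set y := w ∘ Sum.inl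
  set t := w (Sum.inr ())
  rw [hA't] at hw
  have hy : ∀ j, 0 ≤ (Aᵀ *ᵥ y) j + t * c j := fun j => by simpa using hw (Sum.inl j)
  have ht : 0 ≤ t := by simpa using hw (Sum.inr ())
  have hby : b ⬝ᵥ y + γ * t < 0 := by
    simpa [dotProduct, Fintype.sum_sum_type, y, t] using hbw
  rcases ht.eq_or_lt with ht0 | htpos
  -- for `t = 0`, `y` would certify that the primal is infeasible
  · have hb0 : b ⬝ᵥ y < 0 := by simpa [← ht0] using hby
    have hdual : Aᵀ *ᵥ (-y) ≤ 0 := fun j => by simpa [mulVec_neg, ← ht0] using hy j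
    have := A.weak_duality hx₀ hAx₀ hdual
    simp only [dotProduct_neg, zero_dotProduct] at this
    linarith
  · refine ⟨-t⁻¹ • y, fun j => ?_, ?_⟩
    · have := hy j
      simp only [mulVec_smul, Pi.smul_apply, smul_eq_mul]
      rw [neg_mul, neg_le, ← div_eq_inv_mul, le_div_iff₀ htpos]
      linarith
    · rw [dotProduct_smul, smul_eq_mul, neg_mul, lt_neg, ← div_eq_inv_mul, div_lt_iff₀ htpos]
      linarith

theorem exists_dual_gt_of_primal_infeasible (hP : ∀ x, 0 ≤ x → A *ᵥ x ≠ b) {y₀ : I → ℝ}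
    (hy₀ : Aᵀ *ᵥ y₀ ≤ c) (γ : ℝ) : ∃ y, Aᵀ *ᵥ y ≤ c ∧ γ < b ⬝ᵥ y := by
  obtain ⟨d, hd, hbd⟩ := A.farkas hP
  obtain ⟨n, hn⟩ := exists_nat_gt ((γ - b ⬝ᵥ y₀) / -(b ⬝ᵥ d))
  refine ⟨y₀ - (n : ℝ) • d, ?_, ?_⟩
  · rw [mulVec_sub, mulVec_smul]
    exact (sub_le_self _ (smul_nonneg n.cast_nonneg hd)).trans hy₀
  · rw [div_lt_iff₀ (neg_pos.mpr hbd)] at hn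
    rw [dotProduct_sub, dotProduct_smul, smul_eq_mul]
    linarith

end Matrix

section Values

variable {m n : ℕ} (A : Matrix (Fin m) (Fin n) ℝ) (b : Fin m → ℝ) (c : Fin n → ℝ)

lemma dualValA_le_primalValA : dualValA A b c ≤ primalValA A b c := by
  refine sSup_le ?_
  rintro _ ⟨y, hy, rfl⟩
  refine le_sInf ?_
  rintro _ ⟨x, ⟨hAx, hx⟩, rfl⟩
  exact EReal.coe_le_coe_iff.mpr <| A.weak_duality hx hAx hy

lemma exists_dual_gt_of_lt_primalValA
    (hfeas : {x | A *ᵥ x = b ∧ 0 ≤ x}.Nonempty ∨ {y | Aᵀ *ᵥ y ≤ c}.Nonempty) {γ : ℝ}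
    (hγ : (γ : EReal) < primalValA A b c) : ∃ y, Aᵀ *ᵥ y ≤ c ∧ γ < b ⬝ᵥ y := by
  by_cases hP : {x | A *ᵥ x = b ∧ 0 ≤ x}.Nonempty
  · obtain ⟨x₀, hAx₀, hx₀⟩ := hP
    refine A.exists_dual_gt_of_forall_lt_primal hx₀ hAx₀ fun x hx hAx => ?_
    exact EReal.coe_lt_coe_iff.mp (hγ.trans_le (sInf_le ⟨x, ⟨hAx, hx⟩, rfl⟩))
  · obtain ⟨y₀, hy₀⟩ := hfeas.resolve_left hP
    exact A.exists_dual_gt_of_primal_infeasible (fun x hx hAx => hP ⟨x, hAx, hx⟩) hy₀ γ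

lemma primalValA_le_dualValA
    (hfeas : {x | A *ᵥ x = b ∧ 0 ≤ x}.Nonempty ∨ {y | Aᵀ *ᵥ y ≤ c}.Nonempty) :
    primalValA A b c ≤ dualValA A b c := by
  refine le_of_forall_lt fun z hz => ?_
  obtain ⟨γ, hzγ, hγ⟩ := EReal.lt_iff_exists_real_btwn.mp hz
  obtain ⟨y, hy, hγy⟩ := exists_dual_gt_of_lt_primalValA A b c hfeas hγ
  exact hzγ.trans ((EReal.coe_lt_coe_iff.mpr hγy).trans_le (le_sSup ⟨y, hy, rfl⟩))

end Values

/-- The duality gap is zero (primal value = dual value) iff the primal or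
the dual program is feasible. -/
theorem lp_zero_duality_gap_iff_feasible {m n : ℕ} (A : Matrix (Fin m) (Fin n) ℝ)
    (b : Fin m → ℝ) (c : Fin n → ℝ) :
    primalValA A b c = dualValA A b c ↔
      ({x : Fin n → ℝ | A.mulVec x = b ∧ 0 ≤ x}.Nonempty ∨
       {y : Fin m → ℝ | Aᵀ.mulVec y ≤ c}.Nonempty) := by
  refine ⟨fun hgap => ?_, fun hfeas =>
    le_antisymm (primalValA_le_dualValA A b c hfeas) (dualValA_le_primalValA A b c)⟩
  by_contra! hinfeas
  simp [primalValA, dualValA, hinfeas.1, hinfeas.2] at hgap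
end

section
/- The interval system Ax ≤ b, x ≥ 0 with A ∈ [A̲, Ā], b ∈ [b̲, b̄] is weakly feasible (i.e., some scenario is feasible) if and only if the real system A̲x ≤ b̄, x ≥ 0 is feasible. -/
open Matrix

/-- Membership of a real matrix in the interval matrix `[AL, AU]`. -/
def memI {m n : ℕ} (AL AU A : Matrix (Fin m) (Fin n) ℝ) : Prop :=
  ∀ i j, AL i j ≤ A i j ∧ A i j ≤ AU i j

/-- The interval system `Ax ≤ b, x ≥ 0` (A ∈ [A̲,Ā], b ∈ [b̲,b̄]) is weakly
feasible iff the real system `A̲x ≤ b̄, x ≥ 0` is feasible. -/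
theorem interval_weak_feasibility_iff {m n : ℕ}
    (AL AU : Matrix (Fin m) (Fin n) ℝ) (bL bU : Fin m → ℝ) (hA : ∀ i j, AL i j ≤ AU i j) (hb : bL ≤ bU) :
    (∃ A b, ∃ x : Fin n → ℝ, memI AL AU A ∧ bL ≤ b ∧ b ≤ bU ∧
        A.mulVec x ≤ b ∧ 0 ≤ x) ↔
      (∃ x : Fin n → ℝ, AL.mulVec x ≤ bU ∧ 0 ≤ x) := by
  constructor
  · rintro ⟨A, b, x, hmem, hbL, hbU, hAx, hx⟩
    refine ⟨x, fun i => ?_, hx⟩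
    calc AL.mulVec x i ≤ A.mulVec x i := by
          simp only [mulVec, dotProduct]
          apply Finset.sum_le_sum
          intro j _
          exact mul_le_mul_of_nonneg_right (hmem i j).1 (hx j)
      _ ≤ b i := hAx i
      _ ≤ bU i := hbU i
  · rintro ⟨x, hAx, hx⟩
    exact ⟨AL, bU, x, fun i j => ⟨le_refl _, hA i j⟩, hb, le_refl _, hAx, hx⟩
end

section
/- If an interval linear program has strongly zero duality gap, then (i) the primal ILP is weakly feasible or the dual ILP is strongly feasible, and (ii) the primal ILP is strongly feasible or the dual ILP is weakly feasible. -/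
open Matrix

lemma scenario_feasible {m n : ℕ} {A : Matrix (Fin m) (Fin n) ℝ} {b : Fin m → ℝ}
    {c : Fin n → ℝ} (heq : primalValA A b c = dualValA A b c) :
    {x : Fin n → ℝ | A.mulVec x = b ∧ 0 ≤ x}.Nonempty ∨
    {y : Fin m → ℝ | Aᵀ.mulVec y ≤ c}.Nonempty := by
  by_contra hcon
  push_neg at hcon
  obtain ⟨h1, h2⟩ := hcon
  rw [primalValA, dualValA, h1, h2, Set.image_empty, Set.image_empty,
    sInf_empty, sSup_empty] at heq
  exact absurd heq (by simp)

/-- If an ILP has strongly zero duality gap then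
(i) the primal ILP is weakly feasible or the dual ILP is strongly feasible, and
(ii) the primal ILP is strongly feasible or the dual ILP is weakly feasible. -/
theorem strongly_zero_dg_necessary {m n : ℕ}
    (AL AU : Matrix (Fin m) (Fin n) ℝ) (bL bU : Fin m → ℝ) (cL cU : Fin n → ℝ)
    (hA : ∀ i j, AL i j ≤ AU i j) (hb : bL ≤ bU) (hc : cL ≤ cU)
    (h : ∀ A b c, memI AL AU A → bL ≤ b → b ≤ bU → cL ≤ c → c ≤ cU →
        primalValA A b c = dualValA A b c) :
    ((∃ A b, memI AL AU A ∧ bL ≤ b ∧ b ≤ bU ∧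
        {x : Fin n → ℝ | A.mulVec x = b ∧ 0 ≤ x}.Nonempty) ∨
     (∀ A c, memI AL AU A → cL ≤ c → c ≤ cU →
        {y : Fin m → ℝ | Aᵀ.mulVec y ≤ c}.Nonempty)) ∧
    ((∀ A b, memI AL AU A → bL ≤ b → b ≤ bU →
        {x : Fin n → ℝ | A.mulVec x = b ∧ 0 ≤ x}.Nonempty) ∨
     (∃ A c, memI AL AU A ∧ cL ≤ c ∧ c ≤ cU ∧
        {y : Fin m → ℝ | Aᵀ.mulVec y ≤ c}.Nonempty)) := by
  constructor
  · by_cases hd : ∀ A c, memI AL AU A → cL ≤ c → c ≤ cU →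
        {y : Fin m → ℝ | Aᵀ.mulVec y ≤ c}.Nonempty
    · exact Or.inr hd
    · push_neg at hd
      obtain ⟨A, c, hAm, hc1, hc2, hdne⟩ := hd
      left
      refine ⟨A, bL, hAm, le_refl _, hb, ?_⟩
      rcases scenario_feasible (h A bL c hAm (le_refl _) hb hc1 hc2) with hp | hq
      · exact hp
      · rw [hdne] at hq; exact absurd hq (by simp)
  · by_cases hd : ∃ A c, memI AL AU A ∧ cL ≤ c ∧ c ≤ cU ∧
        {y : Fin m → ℝ | Aᵀ.mulVec y ≤ c}.Nonempty
    · exact Or.inr hd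
    · push_neg at hd
      left
      intro A b hAm hb1 hb2
      rcases scenario_feasible (h A b cL hAm hb1 hb2 (le_refl _) hc) with hp | hq
      · exact hp
      · exact absurd hq (by rw [Set.not_nonempty_iff_eq_empty]; exact hd A cL hAm (le_refl _) hc)
end

section
/- There exists an interval linear program whose primal and dual optimal value sets are equal, yet the duality gap is not strongly zero. -/
/-- Optimal value of the one-dimensional primal LP `min c·x  s.t.  a·x ≤ b`. -/
noncomputable def pval (a b c : ℝ) : EReal :=
  sInf ((fun x => ((c * x : ℝ) : EReal)) '' {x : ℝ | a * x ≤ b})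

/-- Optimal value of its dual `max b·y  s.t.  a·y = c, y ≤ 0`. -/
noncomputable def dval (a b c : ℝ) : EReal :=
  sSup ((fun y => ((b * y : ℝ) : EReal)) '' {y : ℝ | a * y = c ∧ y ≤ 0})

/-! For `a > 0` and `c ≤ 0` both problems attain the common finite value `b c / a`, and every
real number is such a value inside the box `[0,1] × [-1,1] × [-1,1]`. For `a = 0` each problem is
infeasible or unbounded, and both `⊤` and `⊥` occur as primal and as dual values, so both value
sets are all of `EReal`; but at `(0, -1, -1)` both problems are infeasible, with values `⊤ ≠ ⊥`. -/

section OneDimensionalLP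

variable {a b c : ℝ}

lemma pval_zero_eq_top (hb : b < 0) : pval 0 b c = ⊤ := by
  have h : {x : ℝ | 0 * x ≤ b} = ∅ := by ext x; simp [hb.not_ge]
  rw [pval, h, Set.image_empty, sInf_empty]

lemma dval_zero_eq_bot (hc : c ≠ 0) : dval 0 b c = ⊥ := by
  have h : {y : ℝ | 0 * y = c ∧ y ≤ 0} = ∅ := by ext y; simp [hc.symm]
  rw [dval, h, Set.image_empty, sSup_empty]

lemma pval_zero_eq_bot (hb : 0 ≤ b) (hc : c ≠ 0) : pval 0 b c = ⊥ := by
  refine (EReal.eq_bot_iff_forall_lt _).2 fun t => ?_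
  calc pval 0 b c ≤ ((c * ((t - 1) / c) : ℝ) : EReal) :=
        sInf_le ⟨(t - 1) / c, by simpa using hb, rfl⟩
    _ < t := by rw [mul_div_cancel₀ _ hc]; exact_mod_cast sub_one_lt t

lemma dval_zero_zero_eq_top (hb : b < 0) : dval 0 b 0 = ⊤ := by
  refine (EReal.eq_top_iff_forall_lt _).2 fun t => ?_
  have hy : (|t| + 1) / b ≤ 0 := div_nonpos_of_nonneg_of_nonpos (by positivity) hb.le
  calc (t : EReal) < ((b * ((|t| + 1) / b) : ℝ) : EReal) := by
        rw [mul_div_cancel₀ _ hb.ne]; exact_mod_cast (le_abs_self t).trans_lt (lt_add_one _)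
    _ ≤ dval 0 b 0 := le_sSup ⟨_, ⟨by simp, hy⟩, rfl⟩

lemma pval_eq_of_pos (ha : 0 < a) (hc : c ≤ 0) : pval a b c = ((b * c / a : ℝ) : EReal) := by
  have hfeas : {x : ℝ | a * x ≤ b} = Set.Iic (b / a) := by
    ext x; simp [le_div_iff₀ ha, mul_comm]
  refine IsLeast.csInf_eq ⟨⟨b / a, by simp [hfeas], by ring_nf⟩, ?_⟩
  rintro _ ⟨x, hx, rfl⟩
  rw [hfeas] at hx
  rw [mul_div_right_comm, mul_comm]
  exact EReal.coe_le_coe_iff.2 (mul_le_mul_of_nonpos_left hx hc)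

lemma dval_eq_of_pos (ha : 0 < a) (hc : c ≤ 0) : dval a b c = ((b * c / a : ℝ) : EReal) := by
  have hfeas : {y : ℝ | a * y = c ∧ y ≤ 0} = {c / a} := by
    ext y
    constructor
    · rintro ⟨h, -⟩
      rw [Set.mem_singleton_iff, eq_div_iff ha.ne', mul_comm, h]
    · rintro rfl
      exact ⟨mul_div_cancel₀ c ha.ne', div_nonpos_of_nonpos_of_nonneg hc ha.le⟩
  simp [dval, hfeas, mul_div_assoc]

lemma exists_pos_le_one_mul_neg_one_div_eq (r : ℝ) :
    ∃ a b : ℝ, 0 < a ∧ a ≤ 1 ∧ -1 ≤ b ∧ b ≤ 1 ∧ b * -1 / a = r := by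
  have hr : 0 < 1 + |r| := by positivity
  refine ⟨1 / (1 + |r|), -r / (1 + |r|), by positivity, ?_, ?_, ?_, ?_⟩
  · rw [div_le_one hr]; linarith [abs_nonneg r]
  · rw [le_div_iff₀ hr]; linarith [le_abs_self r]
  · rw [div_le_one hr]; linarith [neg_le_abs r]
  · field_simp

lemma exists_box_pval_eq (v : EReal) : ∃ a b c : ℝ,
    0 ≤ a ∧ a ≤ 1 ∧ -1 ≤ b ∧ b ≤ 1 ∧ -1 ≤ c ∧ c ≤ 1 ∧ v = pval a b c := by
  induction v using EReal.rec with
  | bot => exact ⟨0, 1, 1, by norm_num [pval_zero_eq_bot]⟩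
  | top => exact ⟨0, -1, -1, by norm_num [pval_zero_eq_top]⟩
  | coe r =>
    obtain ⟨a, b, ha, ha1, hb, hb1, rfl⟩ := exists_pos_le_one_mul_neg_one_div_eq r
    exact ⟨a, b, -1, ha.le, ha1, hb, hb1, by norm_num, by norm_num,
      (pval_eq_of_pos ha (by norm_num)).symm⟩

lemma exists_box_dval_eq (v : EReal) : ∃ a b c : ℝ,
    0 ≤ a ∧ a ≤ 1 ∧ -1 ≤ b ∧ b ≤ 1 ∧ -1 ≤ c ∧ c ≤ 1 ∧ v = dval a b c := by
  induction v using EReal.rec with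
  | bot => exact ⟨0, -1, -1, by norm_num [dval_zero_eq_bot]⟩
  | top => exact ⟨0, -1, 0, by norm_num [dval_zero_zero_eq_top]⟩
  | coe r =>
    obtain ⟨a, b, ha, ha1, hb, hb1, rfl⟩ := exists_pos_le_one_mul_neg_one_div_eq r
    exact ⟨a, b, -1, ha.le, ha1, hb, hb1, by norm_num, by norm_num,
      (dval_eq_of_pos ha (by norm_num)).symm⟩

end OneDimensionalLP

/-- There exists an interval linear program whose primal and dual optimal value
sets coincide, yet whose duality gap is not strongly zero. -/
theorem exists_equal_value_sets_not_strongly_zero_dg :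
    ∃ aL aU bL bU cL cU : ℝ, aL ≤ aU ∧ bL ≤ bU ∧ cL ≤ cU ∧
      ({v : EReal | ∃ a b c, aL ≤ a ∧ a ≤ aU ∧ bL ≤ b ∧ b ≤ bU ∧ cL ≤ c ∧ c ≤ cU ∧
          v = pval a b c} =
        {v : EReal | ∃ a b c, aL ≤ a ∧ a ≤ aU ∧ bL ≤ b ∧ b ≤ bU ∧ cL ≤ c ∧ c ≤ cU ∧
          v = dval a b c}) ∧
      ¬ (∀ a b c, aL ≤ a → a ≤ aU → bL ≤ b → b ≤ bU → cL ≤ c → c ≤ cU →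
          pval a b c = dval a b c) := by
  refine ⟨0, 1, -1, 1, -1, 1, by norm_num, by norm_num, by norm_num, ?_, fun hzero => ?_⟩
  · ext v
    exact ⟨fun _ => exists_box_dval_eq v, fun _ => exists_box_pval_eq v⟩
  · have hgap := hzero 0 (-1) (-1) le_rfl zero_le_one le_rfl (by norm_num) le_rfl (by norm_num)
    rw [pval_zero_eq_top neg_one_lt_zero, dval_zero_eq_bot (by norm_num)] at hgap
    exact top_ne_bot hgap
end

section
/- For the type (A) ILP min {cᵀx : Ax = b, x ≥ 0}, the lower bound of the optimal value set satisfies f̲ = min {c̲ᵀx : A̲x ≤ b̄, −Āx ≤ −b̲, x ≥ 0}. -/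
/-!
A point `x ≥ 0` solves `A x = b` for some `A ∈ [A̲, Ā]`, `b ∈ [b̲, b̄]` exactly when
`A̲ x ≤ b̄` and `Ā x ≥ b̲`: the value `(A x)ᵢ` sweeps the whole interval `[(A̲ x)ᵢ, (Ā x)ᵢ]` as row `i`
of `A` moves along the segment from `A̲ᵢ` to `Āᵢ`. For such `x` the cheapest objective is `c̲ᵀ x`,
so both infima run over the same values.
-/

open Matrix

section WeakSolution

variable {m n : ℕ} {AL AU A : Matrix (Fin m) (Fin n) ℝ} {x : Fin n → ℝ}

lemma mulVec_le_mulVec_of_nonneg (hA : ∀ i j, AL i j ≤ AU i j) (hx : 0 ≤ x) :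
    AL *ᵥ x ≤ AU *ᵥ x := fun i =>
  dotProduct_le_dotProduct_of_nonneg_right (fun j => hA i j) hx

lemma memI.mulVec_le (hA : memI AL AU A) (hx : 0 ≤ x) : AL *ᵥ x ≤ A *ᵥ x :=
  mulVec_le_mulVec_of_nonneg (fun i j => (hA i j).1) hx

lemma memI.le_mulVec (hA : memI AL AU A) (hx : 0 ≤ x) : A *ᵥ x ≤ AU *ᵥ x :=
  mulVec_le_mulVec_of_nonneg (fun i j => (hA i j).2) hx

lemma exists_memI_mulVec_eq (hA : ∀ i j, AL i j ≤ AU i j) (hx : 0 ≤ x) {b : Fin m → ℝ}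
    (hLb : AL *ᵥ x ≤ b) (hbU : b ≤ AU *ᵥ x) : ∃ A, memI AL AU A ∧ A *ᵥ x = b := by
  have hLU := mulVec_le_mulVec_of_nonneg hA hx
  choose s t hs ht hst hcomb using fun i => (Convex.mem_Icc (hLU i)).1 ⟨hLb i, hbU i⟩
  refine ⟨Matrix.of fun i j => s i * AL i j + t i * AU i j, fun i j => ?_, funext fun i => ?_⟩
  · exact (Convex.mem_Icc (hA i j)).2 ⟨s i, t i, hs i, ht i, hst i, rfl⟩
  · rw [← hcomb i]
    simp only [mulVec, dotProduct, of_apply, add_mul, mul_assoc, Finset.sum_add_distrib,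
      Finset.mul_sum]

theorem exists_memI_mulVec_eq_iff (hA : ∀ i j, AL i j ≤ AU i j) {bL bU : Fin m → ℝ}
    (hb : bL ≤ bU) (hx : 0 ≤ x) :
    (∃ A b, memI AL AU A ∧ bL ≤ b ∧ b ≤ bU ∧ A *ᵥ x = b) ↔
      AL *ᵥ x ≤ bU ∧ bL ≤ AU *ᵥ x := by
  constructor
  · rintro ⟨A, b, hAI, hbL, hbU, rfl⟩
    exact ⟨(hAI.mulVec_le hx).trans hbU, hbL.trans (hAI.le_mulVec hx)⟩
  · rintro ⟨hLx, hUx⟩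
    obtain ⟨A, hAI, hAx⟩ := exists_memI_mulVec_eq hA hx le_sup_right
      (sup_le hUx (mulVec_le_mulVec_of_nonneg hA hx))
    exact ⟨A, bL ⊔ AL *ᵥ x, hAI, le_sup_left, sup_le hb hLx, hAx⟩

end WeakSolution

/-- The lower bound of the optimal value set of a type (A) ILP equals the
optimal value of the LP `min c̲ᵀx  s.t.  A̲x ≤ b̄, −Āx ≤ −b̲, x ≥ 0`. -/
theorem typeA_lower_bound_eq {m n : ℕ}
    (AL AU : Matrix (Fin m) (Fin n) ℝ) (bL bU : Fin m → ℝ) (cL cU : Fin n → ℝ)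
    (hA : ∀ i j, AL i j ≤ AU i j) (hb : bL ≤ bU) (hc : cL ≤ cU) :
    sInf {v : EReal | ∃ A b c, memI AL AU A ∧ bL ≤ b ∧ b ≤ bU ∧ cL ≤ c ∧ c ≤ cU ∧
        v = primalValA A b c} =
      sInf ((fun x => ((cL ⬝ᵥ x : ℝ) : EReal)) ''
        {x | AL.mulVec x ≤ bU ∧ -(AU.mulVec x) ≤ -bL ∧ 0 ≤ x}) := by
  apply le_antisymm
  · refine le_sInf ?_
    rintro _ ⟨x, ⟨hLx, hUx, hx⟩, rfl⟩
    obtain ⟨A, b, hAI, hbL, hbU, hAx⟩ :=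
      (exists_memI_mulVec_eq_iff hA hb hx).2 ⟨hLx, neg_le_neg_iff.1 hUx⟩
    exact le_trans (sInf_le ⟨A, b, cL, hAI, hbL, hbU, le_rfl, hc, rfl⟩)
      (sInf_le ⟨x, ⟨hAx, hx⟩, rfl⟩)
  · refine le_sInf ?_
    rintro _ ⟨A, b, c, hAI, hbL, hbU, hcL, -, rfl⟩
    refine le_sInf ?_
    rintro _ ⟨x, ⟨hAx, hx⟩, rfl⟩
    obtain ⟨hLx, hUx⟩ := (exists_memI_mulVec_eq_iff hA hb hx).1 ⟨A, b, hAI, hbL, hbU, hAx⟩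
    refine sInf_le_of_le ⟨x, ⟨hLx, neg_le_neg hUx, hx⟩, rfl⟩ ?_
    exact EReal.coe_le_coe_iff.2 (dotProduct_le_dotProduct_of_nonneg_right hcL hx)
end

section
/- For the type (A) ILP min {cᵀx : Ax = b, x ≥ 0} over intervals (𝐀,𝐛,𝐜), the equality f̲ = max { min_{b ∈ 𝐛} bᵀy : Aᵀy ≤ c for all A ∈ 𝐀 and all c ∈ 𝐜 } holds if and only if the primal ILP is weakly feasible or the dual interval system Aᵀy ≤ c (over all A ∈ 𝐀, c ∈ 𝐜) has a strong solution. -/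
open Matrix

/-!
`f̲` is the value of the single LP `min cLᵀx` subject to `bL ≤ AU x`, `AL x ≤ bU`, `x ≥ 0`: a
nonnegative `x` satisfies these inequalities iff `A x = b` for some `A ∈ 𝐀`, `b ∈ 𝐛`, since
`a ↦ a ⬝ᵥ x` maps the box `[AL k, AU k]` onto an interval meeting `[bL k, bU k]`, and the
objective is smallest at `c = cL`. In the variables `(y⁺, y⁻)` the LP dual of this problem is
`max { min_{b ∈ 𝐛} bᵀy : y a strong solution }`, because the worst `A ∈ 𝐀` for `Aᵀy ≤ c` takes
the row `AU k` where `y k ≥ 0` and `AL k` elsewhere. The theorem is thus LP duality: the two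
optimal values agree in `EReal` iff one of the two problems is feasible. This follows from
Farkas' lemma, proved by induction on the number of generators.
-/

lemma dotProduct_sub_smul_dotProduct {K κ : Type*} [Field K] [Fintype κ] (v w y y' : κ → K)
    (α : K) : (v - (v ⬝ᵥ y / α) • w) ⬝ᵥ y' = v ⬝ᵥ (y' - (w ⬝ᵥ y' / α) • y) := by
  simp only [sub_dotProduct, dotProduct_sub, smul_dotProduct, dotProduct_smul, smul_eq_mul]
  ring

lemma sum_insert_update_smul {ι R M : Type*} [DecidableEq ι] [Semiring R] [AddCommMonoid M]
    [Module R M] {s : Finset ι} {i : ι} (hi : i ∉ s) (l : ι → R) (μ : R) (a : ι → M) :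
    ∑ j ∈ insert i s, Function.update l i μ j • a j = μ • a i + ∑ j ∈ s, l j • a j := by
  rw [Finset.sum_insert hi, Function.update_self]
  congr 1
  refine Finset.sum_congr rfl fun j hj => ?_
  rw [Function.update_of_ne (ne_of_mem_of_not_mem hj hi)]

section Farkas

variable {ι κ : Type*} [Fintype κ]

theorem farkas_cone (s : Finset ι) (a : ι → κ → ℝ) (b : κ → ℝ) :
    (∃ l : ι → ℝ, 0 ≤ l ∧ ∑ j ∈ s, l j • a j = b) ∨
      ∃ y : κ → ℝ, (∀ j ∈ s, a j ⬝ᵥ y ≤ 0) ∧ 0 < b ⬝ᵥ y := by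
  classical
  induction s using Finset.induction_on generalizing a b with
  | empty =>
    by_cases hb : b = 0
    · exact Or.inl ⟨0, le_rfl, by simp [hb]⟩
    · exact Or.inr ⟨b, by simp, by simpa using dotProduct_self_star_pos_iff.2 hb⟩
  | insert i s hi ih =>
    obtain ⟨l, hl, hsum⟩ | ⟨y, hy, hby⟩ := ih a b
    · exact Or.inl ⟨Function.update l i 0, le_update_iff.2 ⟨le_rfl, fun j _ => hl j⟩, by
        rw [sum_insert_update_smul hi, zero_smul, zero_add, hsum]⟩
    set α := a i ⬝ᵥ y
    rcases le_or_gt α 0 with hα | hα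
    · exact Or.inr ⟨y, Finset.forall_mem_insert _ _ _ |>.2 ⟨hα, hy⟩, hby⟩
    -- Project along `a i` onto the hyperplane `y⊥` and recurse.
    let π : (κ → ℝ) → κ → ℝ := fun v => v - (v ⬝ᵥ y / α) • a i
    obtain ⟨l', hl', hsum'⟩ | ⟨y', hy', hby'⟩ := ih (fun j => π (a j)) (π b)
    · set S := ∑ j ∈ s, l' j • a j
      have hSy : S ⬝ᵥ y ≤ 0 := by
        rw [sum_dotProduct]
        exact Finset.sum_nonpos fun j hj => by
          rw [smul_dotProduct, smul_eq_mul]; exact mul_nonpos_of_nonneg_of_nonpos (hl' j) (hy j hj)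
      have hπS : π S = π b := by
        rw [← hsum']
        simp only [π, S, smul_sub, Finset.sum_sub_distrib, smul_smul, ← Finset.sum_smul,
          sum_dotProduct, smul_dotProduct, smul_eq_mul, Finset.sum_div, mul_div_assoc]
      have hμ : 0 ≤ (b ⬝ᵥ y - S ⬝ᵥ y) / α := div_nonneg (sub_nonneg.2 (hSy.trans hby.le)) hα.le
      refine Or.inl ⟨Function.update l' i _, le_update_iff.2 ⟨hμ, fun j _ => hl' j⟩, ?_⟩
      rw [sum_insert_update_smul hi]
      simp only [π] at hπS
      linear_combination (norm := module) hπS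
    · refine Or.inr ⟨y' - (a i ⬝ᵥ y' / α) • y, ?_, ?_⟩
      · refine Finset.forall_mem_insert _ _ _ |>.2 ⟨?_, fun j hj => ?_⟩
        · rw [← dotProduct_sub_smul_dotProduct, div_self hα.ne', one_smul, sub_self,
            zero_dotProduct]
        · rw [← dotProduct_sub_smul_dotProduct]; exact hy' j hj
      · rw [← dotProduct_sub_smul_dotProduct]; exact hby'

theorem farkas_ineq [Fintype ι] (M : Matrix κ ι ℝ) (b : κ → ℝ) :
    (∃ x, 0 ≤ x ∧ b ≤ M *ᵥ x) ∨ ∃ y, 0 ≤ y ∧ Mᵀ *ᵥ y ≤ 0 ∧ 0 < b ⬝ᵥ y := by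
  classical
  -- Columns of `M` together with the negated unit vectors, which absorb the surplus `M x - b`.
  rcases farkas_cone Finset.univ (Sum.elim (fun j => Mᵀ j) fun k => -Pi.single k 1) b with
    ⟨l, hl, hsum⟩ | ⟨y, hy, hby⟩
  · refine Or.inl ⟨l ∘ Sum.inl, fun j => hl _, fun k => ?_⟩
    have hk := congrFun hsum k
    simp only [Finset.sum_apply, Pi.smul_apply, smul_eq_mul, Fintype.sum_sum_type, Sum.elim_inl,
      transpose_apply, mul_comm, Sum.elim_inr, Pi.neg_apply, Pi.single_apply, neg_mul, ite_mul,
      one_mul, zero_mul, Finset.sum_neg_distrib, Finset.sum_ite_eq, Finset.mem_univ,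
      ↓reduceIte] at hk
    rw [← hk]
    exact add_le_of_nonpos_right (neg_nonpos.2 (hl _))
  · refine Or.inr ⟨y, fun k => ?_, fun j => hy (Sum.inl j) (Finset.mem_univ _), hby⟩
    simpa using hy (Sum.inr k) (Finset.mem_univ _)

end Farkas

section LinearProgramming

variable {ι κ : Type*} [Fintype ι] [Fintype κ] {M : Matrix κ ι ℝ} {b : κ → ℝ} {c : ι → ℝ}

theorem weak_duality {x : ι → ℝ} {y : κ → ℝ} (hx : 0 ≤ x) (hMx : b ≤ M *ᵥ x) (hy : 0 ≤ y)
    (hMy : Mᵀ *ᵥ y ≤ c) : b ⬝ᵥ y ≤ c ⬝ᵥ x :=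
  calc b ⬝ᵥ y ≤ (M *ᵥ x) ⬝ᵥ y := dotProduct_le_dotProduct_of_nonneg_right hMx hy
    _ = (Mᵀ *ᵥ y) ⬝ᵥ x := by rw [mulVec_transpose, dotProduct_comm, dotProduct_mulVec]
    _ ≤ c ⬝ᵥ x := dotProduct_le_dotProduct_of_nonneg_right hMy hx

theorem exists_dual_gt_of_forall_primal_gt {x₀ : ι → ℝ} (hx₀ : 0 ≤ x₀) (hMx₀ : b ≤ M *ᵥ x₀)
    {γ : ℝ} (hγ : ∀ x, 0 ≤ x → b ≤ M *ᵥ x → γ < c ⬝ᵥ x) :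
    ∃ y, 0 ≤ y ∧ Mᵀ *ᵥ y ≤ c ∧ γ < b ⬝ᵥ y := by
  -- Farkas for the primal system augmented by the cut `c ⬝ᵥ x ≤ γ`.
  rcases farkas_ineq (fromRows M (replicateRow Unit (-c))) (Sum.elim b fun _ => -γ) with
    ⟨x, hx, hMx⟩ | ⟨w, hw, hMw, hbw⟩
  · simp only [fromRows_mulVec, Sum.elim_le_elim_iff, replicateRow_mulVec_eq_const] at hMx
    have hcx : -γ ≤ -c ⬝ᵥ x := hMx.2 ()
    rw [neg_dotProduct, neg_le_neg_iff] at hcx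
    exact absurd hcx (hγ x hx hMx.1).not_ge
  set v : κ → ℝ := w ∘ Sum.inl
  set τ : ℝ := w (Sum.inr ())
  have hMv : Mᵀ *ᵥ v ≤ τ • c := by
    have : (fromRows M (replicateRow Unit (-c)))ᵀ *ᵥ w = Mᵀ *ᵥ v - τ • c := by
      ext j
      simp [mulVec, dotProduct, v, τ, sub_eq_add_neg, mul_comm]
    rwa [this, sub_nonpos] at hMw
  have hbv : τ * γ < b ⬝ᵥ v := by
    have : (Sum.elim b fun _ => -γ) ⬝ᵥ w = b ⬝ᵥ v - τ * γ := by
      simp [dotProduct, Fintype.sum_sum_type, v, τ, sub_eq_add_neg, mul_comm]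
    rwa [this, sub_pos] at hbw
  have hv : 0 ≤ v := fun k => hw _
  rcases (show 0 ≤ τ from hw _).eq_or_lt with hτ | hτ
  · -- `τ = 0`: then `v` certifies that the primal is infeasible, contradicting `x₀`.
    have hbv0 : b ⬝ᵥ v ≤ 0 := by
      simpa using weak_duality (c := 0) hx₀ hMx₀ hv (by simpa [← hτ] using hMv)
    rw [← hτ, zero_mul] at hbv
    exact absurd hbv0 hbv.not_ge
  · refine ⟨τ⁻¹ • v, smul_nonneg (inv_nonneg.2 hτ.le) hv, ?_, ?_⟩
    · calc Mᵀ *ᵥ (τ⁻¹ • v) = τ⁻¹ • (Mᵀ *ᵥ v) := mulVec_smul _ _ _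
        _ ≤ τ⁻¹ • (τ • c) := smul_le_smul_of_nonneg_left hMv (inv_nonneg.2 hτ.le)
        _ = c := inv_smul_smul₀ hτ.ne' c
    · rwa [dotProduct_smul, smul_eq_mul, lt_inv_mul_iff₀ hτ]

theorem exists_dual_gt_of_primal_infeasible (hP : ¬∃ x, 0 ≤ x ∧ b ≤ M *ᵥ x) {y₀ : κ → ℝ}
    (hy₀ : 0 ≤ y₀) (hMy₀ : Mᵀ *ᵥ y₀ ≤ c) (γ : ℝ) : ∃ y, 0 ≤ y ∧ Mᵀ *ᵥ y ≤ c ∧ γ < b ⬝ᵥ y := by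
  by_contra! h
  -- The dual is the primal of `(-Mᵀ, -c, -b)`, whose dual is the original primal.
  obtain ⟨x, hx, hMx, -⟩ := exists_dual_gt_of_forall_primal_gt (M := -Mᵀ) (b := -c) (c := -b)
    (γ := -γ - 1) hy₀ (by simpa [neg_mulVec] using hMy₀) fun y hy hMy => by
      have := h y hy (by simpa [neg_mulVec] using hMy)
      rw [neg_dotProduct]; linarith
  exact hP ⟨x, hx, by simpa [neg_mulVec] using hMx⟩

theorem sInf_primal_eq_sSup_dual_iff :
    sInf ((fun x => ((c ⬝ᵥ x : ℝ) : EReal)) '' {x | 0 ≤ x ∧ b ≤ M *ᵥ x}) =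
        sSup ((fun y => ((b ⬝ᵥ y : ℝ) : EReal)) '' {y | 0 ≤ y ∧ Mᵀ *ᵥ y ≤ c}) ↔
      {x | 0 ≤ x ∧ b ≤ M *ᵥ x}.Nonempty ∨ {y | 0 ≤ y ∧ Mᵀ *ᵥ y ≤ c}.Nonempty := by
  refine ⟨fun h => ?_, fun h => ?_⟩
  · by_contra! hPD
    simp [hPD.1, hPD.2] at h
  refine le_antisymm (le_of_forall_lt fun e he => ?_) <|
    sSup_le <| Set.forall_mem_image.2 fun y ⟨hy, hMy⟩ =>
      le_sInf <| Set.forall_mem_image.2 fun x ⟨hx, hMx⟩ =>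
        EReal.coe_le_coe_iff.2 (weak_duality hx hMx hy hMy)
  obtain ⟨γ, heγ, hγ⟩ := EReal.lt_iff_exists_real_btwn.1 he
  obtain ⟨y, hy, hMy, hγy⟩ : ∃ y, 0 ≤ y ∧ Mᵀ *ᵥ y ≤ c ∧ γ < b ⬝ᵥ y := by
    by_cases hP : ∃ x, 0 ≤ x ∧ b ≤ M *ᵥ x
    · obtain ⟨x₀, hx₀, hMx₀⟩ := hP
      exact exists_dual_gt_of_forall_primal_gt hx₀ hMx₀ fun x hx hMx =>
        EReal.coe_lt_coe_iff.1 (hγ.trans_le (sInf_le ⟨x, ⟨hx, hMx⟩, rfl⟩))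
    · obtain ⟨y₀, hy₀, hMy₀⟩ := h.resolve_left hP
      exact exists_dual_gt_of_primal_infeasible hP hy₀ hMy₀ γ
  exact heγ.trans ((EReal.coe_lt_coe_iff.2 hγy).trans_le (le_sSup ⟨y, ⟨hy, hMy⟩, rfl⟩))

end LinearProgramming

section IntervalSystem

lemma ite_nonneg_mul_eq_posPart_sub_negPart {α : Type*} [Ring α] [LinearOrder α]
    [IsOrderedRing α] (l u t : α) :
    (if 0 ≤ t then u else l) * t = u * t⁺ - l * t⁻ := by
  split_ifs with ht
  · simp [posPart_eq_self.2 ht, negPart_eq_zero.2 ht]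
  · have ht' : t ≤ 0 := le_of_not_ge ht
    simp [posPart_eq_zero.2 ht', negPart_eq_neg.2 ht']

lemma exists_mem_Icc_dotProduct_eq {ι : Type*} [Fintype ι] {l u x : ι → ℝ} (hlu : l ≤ u)
    (hx : 0 ≤ x) {v : ℝ} (hv : v ∈ Set.Icc (l ⬝ᵥ x) (u ⬝ᵥ x)) :
    ∃ a ∈ Set.Icc l u, a ⬝ᵥ x = v := by
  let f : (ι → ℝ) →ᵃ[ℝ] ℝ := ((dotProductBilin ℝ ℝ).flip x).toAffineMap
  rw [← segment_eq_Icc (dotProduct_le_dotProduct_of_nonneg_right hlu hx)] at hv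
  obtain ⟨a, ha, rfl⟩ : v ∈ f '' segment ℝ l u := by rwa [image_segment]
  exact ⟨a, segment_subset_Icc hlu ha, rfl⟩

lemma mulVec_le_mulVec_of_le {ι κ : Type*} [Fintype ι] {A B : Matrix κ ι ℝ}
    (hAB : ∀ i j, A i j ≤ B i j) {x : ι → ℝ} (hx : 0 ≤ x) : A *ᵥ x ≤ B *ᵥ x :=
  fun i => dotProduct_le_dotProduct_of_nonneg_right (hAB i) hx

variable {m n : ℕ}

def intervalMatrix (AL AU : Matrix (Fin m) (Fin n) ℝ) : Matrix (Fin m ⊕ Fin m) (Fin n) ℝ :=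
  fromRows AU (-AL)

def intervalRhs (bL bU : Fin m → ℝ) : Fin m ⊕ Fin m → ℝ :=
  Sum.elim bL (-bU)

variable {AL AU : Matrix (Fin m) (Fin n) ℝ} {bL bU : Fin m → ℝ} {cL : Fin n → ℝ}

lemma intervalRhs_le_intervalMatrix_mulVec_iff {x : Fin n → ℝ} :
    intervalRhs bL bU ≤ intervalMatrix AL AU *ᵥ x ↔ bL ≤ AU *ᵥ x ∧ AL *ᵥ x ≤ bU := by
  simp [intervalRhs, intervalMatrix, neg_mulVec]

lemma intervalMatrix_transpose_mulVec (z : Fin m ⊕ Fin m → ℝ) :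
    (intervalMatrix AL AU)ᵀ *ᵥ z = AUᵀ *ᵥ (z ∘ Sum.inl) - ALᵀ *ᵥ (z ∘ Sum.inr) := by
  simp [intervalMatrix, transpose_fromRows, neg_mulVec, sub_eq_add_neg]

lemma intervalRhs_dotProduct (z : Fin m ⊕ Fin m → ℝ) :
    intervalRhs bL bU ⬝ᵥ z = bL ⬝ᵥ (z ∘ Sum.inl) - bU ⬝ᵥ (z ∘ Sum.inr) := by
  simp [intervalRhs, dotProduct, Fintype.sum_sum_type, sub_eq_add_neg]

theorem nonneg_weak_solution_iff (hA : ∀ i j, AL i j ≤ AU i j) (hb : bL ≤ bU) {x : Fin n → ℝ} :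
    (0 ≤ x ∧ intervalRhs bL bU ≤ intervalMatrix AL AU *ᵥ x) ↔
      ∃ A b, memI AL AU A ∧ bL ≤ b ∧ b ≤ bU ∧ A *ᵥ x = b ∧ 0 ≤ x := by
  rw [intervalRhs_le_intervalMatrix_mulVec_iff]
  constructor
  · rintro ⟨hx, hU, hL⟩
    have hrow (k : Fin m) : ∃ a ∈ Set.Icc (AL k) (AU k), a ⬝ᵥ x = max (bL k) ((AL *ᵥ x) k) :=
      exists_mem_Icc_dotProduct_eq (hA k) hx
        ⟨le_max_right _ _, max_le (hU k) (mulVec_le_mulVec_of_le hA hx k)⟩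
    choose A hA hAx using hrow
    exact ⟨A, _, fun i j => ⟨(hA i).1 j, (hA i).2 j⟩, fun k => le_max_left _ _,
      fun k => max_le (hb k) (hL k), funext hAx, hx⟩
  · rintro ⟨A, b, hA, hbL, hbU, rfl, hx⟩
    exact ⟨hx, hbL.trans (mulVec_le_mulVec_of_le (fun i j => (hA i j).2) hx),
      (mulVec_le_mulVec_of_le (fun i j => (hA i j).1) hx).trans hbU⟩

lemma mulVec_le_of_mem_intervalDual {z : Fin m ⊕ Fin m → ℝ} (hz : 0 ≤ z)
    (hMz : (intervalMatrix AL AU)ᵀ *ᵥ z ≤ cL) {A : Matrix (Fin m) (Fin n) ℝ} (hA : memI AL AU A) :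
    Aᵀ *ᵥ (z ∘ Sum.inl - z ∘ Sum.inr) ≤ cL :=
  calc Aᵀ *ᵥ (z ∘ Sum.inl - z ∘ Sum.inr) = Aᵀ *ᵥ (z ∘ Sum.inl) - Aᵀ *ᵥ (z ∘ Sum.inr) :=
        mulVec_sub _ _ _
    _ ≤ AUᵀ *ᵥ (z ∘ Sum.inl) - ALᵀ *ᵥ (z ∘ Sum.inr) :=
        sub_le_sub (mulVec_le_mulVec_of_le (fun j k => (hA k j).2) fun _ => hz _)
          (mulVec_le_mulVec_of_le (fun j k => (hA k j).1) fun _ => hz _)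
    _ = (intervalMatrix AL AU)ᵀ *ᵥ z := (intervalMatrix_transpose_mulVec z).symm
    _ ≤ cL := hMz

lemma intervalRhs_dotProduct_le {z : Fin m ⊕ Fin m → ℝ} (hz : 0 ≤ z) {b : Fin m → ℝ}
    (hbL : bL ≤ b) (hbU : b ≤ bU) :
    intervalRhs bL bU ⬝ᵥ z ≤ b ⬝ᵥ (z ∘ Sum.inl - z ∘ Sum.inr) := by
  rw [intervalRhs_dotProduct, dotProduct_sub]
  exact sub_le_sub (dotProduct_le_dotProduct_of_nonneg_right hbL fun _ => hz _)
    (dotProduct_le_dotProduct_of_nonneg_right hbU fun _ => hz _)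

lemma posPart_negPart_mem_intervalDual (hA : ∀ i j, AL i j ≤ AU i j) {y : Fin m → ℝ}
    (hy : ∀ A, memI AL AU A → Aᵀ *ᵥ y ≤ cL) :
    0 ≤ Sum.elim y⁺ y⁻ ∧ (intervalMatrix AL AU)ᵀ *ᵥ Sum.elim y⁺ y⁻ ≤ cL := by
  refine ⟨Sum.forall.2 ⟨fun k => posPart_nonneg (y k), fun k => negPart_nonneg (y k)⟩, ?_⟩
  -- The matrix of `[AL, AU]` maximizing `Aᵀ y` entrywise.
  let Ay : Matrix (Fin m) (Fin n) ℝ := of fun k j => if 0 ≤ y k then AU k j else AL k j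
  have hAy : memI AL AU Ay := fun k j => by
    simp only [Ay, of_apply]; split_ifs <;> simp [hA k j]
  convert hy Ay hAy using 1
  rw [intervalMatrix_transpose_mulVec]
  ext j
  simp only [Pi.sub_apply, mulVec, dotProduct, transpose_apply,
    Function.comp_apply, Sum.elim_inl, Sum.elim_inr, Pi.posPart_apply, Pi.negPart_apply, Ay,
    of_apply, ← Finset.sum_sub_distrib, ite_nonneg_mul_eq_posPart_sub_negPart]

lemma exists_dotProduct_eq_intervalRhs_dotProduct (hb : bL ≤ bU) (y : Fin m → ℝ) :
    ∃ b, bL ≤ b ∧ b ≤ bU ∧ b ⬝ᵥ y = intervalRhs bL bU ⬝ᵥ Sum.elim y⁺ y⁻ := by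
  refine ⟨fun k => if 0 ≤ y k then bL k else bU k, fun k => ?_, fun k => ?_, ?_⟩
  · by_cases h : 0 ≤ y k <;> simp [h, hb k]
  · by_cases h : 0 ≤ y k <;> simp [h, hb k]
  · rw [intervalRhs_dotProduct]
    simp only [dotProduct, Function.comp_apply, Sum.elim_inl,
      Sum.elim_inr, Pi.posPart_apply, Pi.negPart_apply, ← Finset.sum_sub_distrib,
      ite_nonneg_mul_eq_posPart_sub_negPart]

end IntervalSystem

section IntervalDuality

variable {m n : ℕ} {AL AU : Matrix (Fin m) (Fin n) ℝ} {bL bU : Fin m → ℝ} {cL cU : Fin n → ℝ}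

theorem sInf_primalValA_eq (hA : ∀ i j, AL i j ≤ AU i j) (hb : bL ≤ bU) (hc : cL ≤ cU) :
    sInf {v : EReal | ∃ A b c, memI AL AU A ∧ bL ≤ b ∧ b ≤ bU ∧ cL ≤ c ∧ c ≤ cU ∧
        v = primalValA A b c} =
      sInf ((fun x => ((cL ⬝ᵥ x : ℝ) : EReal)) ''
        {x | 0 ≤ x ∧ intervalRhs bL bU ≤ intervalMatrix AL AU *ᵥ x}) := by
  refine le_antisymm (le_sInf <| Set.forall_mem_image.2 fun x hx => ?_) (le_sInf ?_)
  · obtain ⟨A, b, hA', hbL, hbU, hAx, hx⟩ := (nonneg_weak_solution_iff hA hb).1 hx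
    exact sInf_le_of_le ⟨A, b, cL, hA', hbL, hbU, le_rfl, hc, rfl⟩ (sInf_le ⟨x, ⟨hAx, hx⟩, rfl⟩)
  · rintro _ ⟨A, b, c, hA', hbL, hbU, hcL, -, rfl⟩
    refine le_sInf <| Set.forall_mem_image.2 fun x ⟨hAx, hx⟩ => sInf_le_of_le
      ⟨x, (nonneg_weak_solution_iff hA hb).2 ⟨A, b, hA', hbL, hbU, hAx, hx⟩, rfl⟩ ?_
    exact EReal.coe_le_coe_iff.2 (dotProduct_le_dotProduct_of_nonneg_right hcL hx)

theorem sSup_strong_solutions_eq (hA : ∀ i j, AL i j ≤ AU i j) (hb : bL ≤ bU) (hc : cL ≤ cU) :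
    sSup ((fun y => sInf ((fun b => ((b ⬝ᵥ y : ℝ) : EReal)) '' {b | bL ≤ b ∧ b ≤ bU})) ''
        {y : Fin m → ℝ | ∀ A c, memI AL AU A → cL ≤ c → c ≤ cU → Aᵀ.mulVec y ≤ c}) =
      sSup ((fun z => ((intervalRhs bL bU ⬝ᵥ z : ℝ) : EReal)) ''
        {z | 0 ≤ z ∧ (intervalMatrix AL AU)ᵀ *ᵥ z ≤ cL}) := by
  refine le_antisymm (sSup_le <| Set.forall_mem_image.2 fun y hy => ?_)
    (sSup_le <| Set.forall_mem_image.2 fun z ⟨hz, hMz⟩ => ?_)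
  · obtain ⟨b, hbL, hbU, hby⟩ := exists_dotProduct_eq_intervalRhs_dotProduct hb y
    exact sInf_le_of_le ⟨b, ⟨hbL, hbU⟩, rfl⟩ <| le_sSup_of_le
      ⟨_, posPart_negPart_mem_intervalDual hA fun A hA' => hy A cL hA' le_rfl hc, rfl⟩
      (EReal.coe_le_coe_iff.2 hby.le)
  · exact le_sSup_of_le
      ⟨_, fun A c hA' hcL _ => (mulVec_le_of_mem_intervalDual hz hMz hA').trans hcL, rfl⟩
      (le_sInf <| Set.forall_mem_image.2 fun b ⟨hbL, hbU⟩ =>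
        EReal.coe_le_coe_iff.2 (intervalRhs_dotProduct_le hz hbL hbU))

end IntervalDuality

/-- For a type (A) ILP, the equality
`f̲ = max { min_{b ∈ 𝐛} bᵀy : Aᵀy ≤ c for all A ∈ 𝐀, c ∈ 𝐜 }`
holds iff the primal ILP is weakly feasible or the dual interval system has a
strong solution. -/
theorem typeA_lower_bound_dual_characterization {m n : ℕ}
    (AL AU : Matrix (Fin m) (Fin n) ℝ) (bL bU : Fin m → ℝ) (cL cU : Fin n → ℝ)
    (hA : ∀ i j, AL i j ≤ AU i j) (hb : bL ≤ bU) (hc : cL ≤ cU) :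
    (sInf {v : EReal | ∃ A b c, memI AL AU A ∧ bL ≤ b ∧ b ≤ bU ∧ cL ≤ c ∧ c ≤ cU ∧
          v = primalValA A b c} =
        sSup ((fun y => sInf ((fun b => ((b ⬝ᵥ y : ℝ) : EReal)) '' {b | bL ≤ b ∧ b ≤ bU})) ''
          {y : Fin m → ℝ | ∀ A c, memI AL AU A → cL ≤ c → c ≤ cU → Aᵀ.mulVec y ≤ c})) ↔
      ((∃ A b, memI AL AU A ∧ bL ≤ b ∧ b ≤ bU ∧
          {x : Fin n → ℝ | A.mulVec x = b ∧ 0 ≤ x}.Nonempty) ∨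
       {y : Fin m → ℝ | ∀ A c, memI AL AU A → cL ≤ c → c ≤ cU → Aᵀ.mulVec y ≤ c}.Nonempty) := by
  rw [sInf_primalValA_eq hA hb hc, sSup_strong_solutions_eq hA hb hc, sInf_primal_eq_sSup_dual_iff]
  refine or_congr ⟨fun ⟨x, hx⟩ => ?_, fun ⟨A, b, hA', hbL, hbU, x, hAx, hx⟩ => ?_⟩
    ⟨fun ⟨z, hz, hMz⟩ => ?_, fun ⟨y, hy⟩ => ?_⟩
  · obtain ⟨A, b, hA', hbL, hbU, hAx, hx⟩ := (nonneg_weak_solution_iff hA hb).1 hx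
    exact ⟨A, b, hA', hbL, hbU, x, hAx, hx⟩
  · exact ⟨x, (nonneg_weak_solution_iff hA hb).2 ⟨A, b, hA', hbL, hbU, hAx, hx⟩⟩
  · exact ⟨_, fun A c hA' hcL _ => (mulVec_le_of_mem_intervalDual hz hMz hA').trans hcL⟩
  · exact ⟨_, posPart_negPart_mem_intervalDual hA fun A hA' => hy A cL hA' le_rfl hc⟩
end
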